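/- arXiv:1901.01746 — 6 statements merged into one kernel-verified Lean document; each statement's English description precedes it below -/
import Mathlib

section
/- Let M be an F-subspace of V such that V = M + M⊥, where M⊥ = { v ∈ V : B(v,m) = 0 for all m ∈ M }. Let g be an invertible element of C(V,Q) lying in the even part of the subalgebra generated by ι(M), and suppose g·ι(m)·g⁻¹ ∈ ι(M) for all m ∈ M. Then g·ι(x)·g⁻¹ ∈ ι(V) for all x ∈ V; that is, conjugation by g preserves the image of V in the Clifford algebra. -/
/-! Write `x = m + w` with `m ∈ M` and `w ⟂ M`. Since `ι w` anticommutes with every `ι m'`,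
`m' ∈ M`, it twisted-commutes with the whole subalgebra generated by `ι(M)`:
`ι w * a = involute a * ι w`. For even `g` the involute is trivial, so `g` commutes with `ι w`
and `g ι(x) g⁻¹ = g ι(m) g⁻¹ + ι w ∈ ι(M) + ι(V) ⊆ ι(V)`. -/

namespace CliffordAlgebra

variable {R M : Type*} [CommRing R] [AddCommGroup M] [Module R M] {Q : QuadraticForm R M}

theorem ι_mul_eq_involute_mul_ι_of_mem_adjoin {s : Set M} {w : M}
    (hw : ∀ m ∈ s, Q.IsOrtho w m) {a : CliffordAlgebra Q}
    (ha : a ∈ Algebra.adjoin R (ι Q '' s)) :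
    ι Q w * a = involute a * ι Q w := by
  induction ha using Algebra.adjoin_induction with
  | mem a ha =>
    obtain ⟨m, hm, rfl⟩ := ha
    rw [ι_mul_ι_comm_of_isOrtho (hw m hm), involute_ι, neg_mul]
  | algebraMap r => rw [AlgHom.commutes, Algebra.commutes]
  | add a b _ _ ha hb => rw [mul_add, map_add, add_mul, ha, hb]
  | mul a b _ _ ha hb => rw [map_mul, ← mul_assoc, ha, mul_assoc, hb, mul_assoc]

theorem commute_ι_of_mem_adjoin_of_mem_even {s : Set M} {w : M}
    (hw : ∀ m ∈ s, Q.IsOrtho w m) {a : CliffordAlgebra Q}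
    (ha : a ∈ Algebra.adjoin R (ι Q '' s)) (ha₀ : a ∈ evenOdd Q 0) :
    Commute (ι Q w) a := by
  rw [Commute, SemiconjBy, ι_mul_eq_involute_mul_ι_of_mem_adjoin hw ha,
    involute_eq_of_mem_even ha₀]

theorem conj_ι_eq_of_mem_adjoin_of_mem_even {s : Set M} {w : M}
    (hw : ∀ m ∈ s, Q.IsOrtho w m) {g : (CliffordAlgebra Q)ˣ}
    (hg : (g : CliffordAlgebra Q) ∈ Algebra.adjoin R (ι Q '' s))
    (hg₀ : (g : CliffordAlgebra Q) ∈ evenOdd Q 0) :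
    (g : CliffordAlgebra Q) * ι Q w * ↑g⁻¹ = ι Q w := by
  rw [← (commute_ι_of_mem_adjoin_of_mem_even hw hg hg₀).eq, mul_assoc, Units.mul_inv, mul_one]

end CliffordAlgebra

theorem clifford_conj_preserves_ι_of_conj_preserves_subspace_general
    {F V : Type*} [Field F] [AddCommGroup V] [Module F V]
    (Q : QuadraticForm F V) (M : Submodule F V)
    (hM : ∀ x : V, ∃ m ∈ M, ∃ w : V,
      (∀ m' ∈ M, QuadraticMap.polar Q w m' = 0) ∧ x = m + w)
    (g : (CliffordAlgebra Q)ˣ)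
    (hg₁ : (g : CliffordAlgebra Q) ∈ Algebra.adjoin F (CliffordAlgebra.ι Q '' (M : Set V)))
    (hg₂ : (g : CliffordAlgebra Q) ∈ CliffordAlgebra.evenOdd Q 0)
    (hconj : ∀ m ∈ M,
      (g : CliffordAlgebra Q) * CliffordAlgebra.ι Q m * (↑g⁻¹ : CliffordAlgebra Q)
        ∈ CliffordAlgebra.ι Q '' (M : Set V)) :
    ∀ x : V,
      (g : CliffordAlgebra Q) * CliffordAlgebra.ι Q x * (↑g⁻¹ : CliffordAlgebra Q)
        ∈ Set.range (CliffordAlgebra.ι Q) := by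
  intro x
  obtain ⟨m, hm, w, hw, rfl⟩ := hM x
  have hw_ortho : ∀ m' ∈ (M : Set V), Q.IsOrtho w m' := fun m' hm' =>
    QuadraticMap.isOrtho_polarBilin.mp (hw m' hm')
  obtain ⟨m', -, hm'⟩ := hconj m hm
  refine ⟨m' + w, ?_⟩
  rw [map_add, map_add, mul_add, add_mul, ← hm',
    CliffordAlgebra.conj_ι_eq_of_mem_adjoin_of_mem_even hw_ortho hg₁ hg₂]

/-- Let `F` be a field of characteristic different from 2, `V` an `F`-vector space with quadratic
form `Q`, and `M ⊆ V` a subspace such that `V = M + M⊥` (every `x ∈ V` is a sum of an element of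
`M` and a vector orthogonal to `M` for the polar form).  Let `g` be an invertible element of
`C(V,Q)` lying in the even part of the subalgebra generated by `ι(M)`, and suppose that
`g · ι(m) · g⁻¹ ∈ ι(M)` for all `m ∈ M`.  Then `g · ι(x) · g⁻¹ ∈ ι(V)` for all `x ∈ V`, i.e.
conjugation by `g` preserves the image of `V` in the Clifford algebra. -/
theorem clifford_conj_preserves_ι_of_conj_preserves_subspace
    {F V : Type*} [Field F] [AddCommGroup V] [Module F V]
    (hchar : (2 : F) ≠ 0)
    (Q : QuadraticForm F V) (M : Submodule F V)
    (hM : ∀ x : V, ∃ m ∈ M, ∃ w : V,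
      (∀ m' ∈ M, QuadraticMap.polar Q w m' = 0) ∧ x = m + w)
    (g : (CliffordAlgebra Q)ˣ)
    (hg₁ : (g : CliffordAlgebra Q) ∈ Algebra.adjoin F (CliffordAlgebra.ι Q '' (M : Set V)))
    (hg₂ : (g : CliffordAlgebra Q) ∈ CliffordAlgebra.evenOdd Q 0)
    (hconj : ∀ m ∈ M,
      (g : CliffordAlgebra Q) * CliffordAlgebra.ι Q m * (↑g⁻¹ : CliffordAlgebra Q)
        ∈ CliffordAlgebra.ι Q '' (M : Set V)) :
    ∀ x : V,
      (g : CliffordAlgebra Q) * CliffordAlgebra.ι Q x * (↑g⁻¹ : CliffordAlgebra Q)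
        ∈ Set.range (CliffordAlgebra.ι Q) :=
  clifford_conj_preserves_ι_of_conj_preserves_subspace_general Q M hM g hg₁ hg₂ hconj
end

section
/- Let G be a locally compact Hausdorff unimodular topological group with Haar measure μ, and let K be a compact open subgroup of G equipped with its Haar probability measure dk. Then for every m ∈ G and every function f : G → ℂ that is integrable on the double coset KmK, one has ∫_{KmK} f(x) dμ(x) = μ(KmK) · ∫_K ∫_K f(k₁ m k₂) dk₁ dk₂. -/
/-!
Write `q : G → G ⧸ K`. The double coset `KmK` is the preimage under `q` of the `K`-orbit `O` of
`mK`, and `O` is finite because `K` is compact and `G ⧸ K` is discrete. Hence `∫_{KmK} f` is the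
sum over `t ∈ O` of the integrals of `f` over the cosets `q⁻¹ t`, and `μ(KmK) = |O| μ(K)`.

Since `ν` is the normalised restriction of `μ` to `K`, the inner integral
`∫ f(k₁ m k₂) dk₂` is `μ(K)⁻¹` times the integral of `f` over the coset `k₁ m K`. The outer
integral then averages this over the orbit map `k₁ ↦ k₁ • mK`, which pushes `ν` forward to the
uniform distribution on `O` because a Haar probability measure is also right-invariant.
-/

open MeasureTheory Measure Set

theorem doubleCoset_eq_preimage_mk_orbit {G : Type*} [Group G] (K : Subgroup G) (m : G) :
    {x : G | ∃ k₁ ∈ K, ∃ k₂ ∈ K, x = k₁ * m * k₂}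
      = QuotientGroup.mk ⁻¹' MulAction.orbit K (m : G ⧸ K) := by
  ext x
  constructor
  · rintro ⟨k₁, hk₁, k₂, hk₂, rfl⟩
    exact ⟨⟨k₁, hk₁⟩, (QuotientGroup.mk_mul_of_mem (k₁ * m) hk₂).symm⟩
  · rintro ⟨⟨k₁, hk₁⟩, hx⟩
    exact ⟨k₁, hk₁, (k₁ * m)⁻¹ * x, QuotientGroup.eq.mp hx, by group⟩

theorem QuotientGroup.preimage_mul_left_preimage_mk_singleton {G : Type*} [Group G]
    (K : Subgroup G) (g : G) :
    (g * ·) ⁻¹' (QuotientGroup.mk ⁻¹' {(g : G ⧸ K)}) = K := by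
  ext y
  simp [QuotientGroup.eq]

section HaarProbability

variable {K : Type*} [Group K] [TopologicalSpace K] [IsTopologicalGroup K]
  [MeasurableSpace K] [BorelSpace K] (ν : Measure K) [ν.IsHaarMeasure] [IsProbabilityMeasure ν]

theorem MeasureTheory.Measure.IsHaarMeasure.isMulRightInvariant_of_isProbabilityMeasure [LocallyCompactSpace K] :
    ν.IsMulRightInvariant where
  map_mul_right_eq_self g :=
    have := isProbabilityMeasure_map (μ := ν) (measurable_mul_const g).aemeasurable
    isHaarMeasure_eq_of_isProbabilityMeasure _ _

theorem card_smul_integral_smul_eq_sum_orbit [CompactSpace K] {X E : Type*} [TopologicalSpace X]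
    [DiscreteTopology X] [MulAction K X] [ContinuousSMul K X] [NormedAddCommGroup E]
    [NormedSpace ℝ E] [CompleteSpace E] (x₀ : X) (O : Finset X)
    (hO : (O : Set X) = MulAction.orbit K x₀) (φ : X → E) :
    O.card • ∫ k, φ (k • x₀) ∂ν = ∑ x ∈ O, φ x := by
  have := IsHaarMeasure.isMulRightInvariant_of_isProbabilityMeasure ν
  have hmem : ∀ (k : K) {x}, x ∈ O → k • x ∈ O := by
    intro k x hx
    rw [← Finset.mem_coe, hO] at hx ⊢
    rw [← MulAction.orbit_eq_iff.mpr hx]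
    exact MulAction.mem_orbit x k
  -- right invariance of `ν`: moving the base point along the orbit does not change the integral
  have hconst : ∀ x ∈ O, ∫ k, φ (k • x) ∂ν = ∫ k, φ (k • x₀) ∂ν := by
    intro x hx
    rw [← Finset.mem_coe, hO] at hx
    obtain ⟨a, rfl⟩ := hx
    simp_rw [smul_smul]
    exact integral_mul_right_eq_self (fun k => φ (k • x₀)) a
  have hsum_smul (k : K) : ∑ x ∈ O, φ (k • x) = ∑ x ∈ O, φ x :=
    Finset.sum_equiv (MulAction.toPerm k)
      (fun x => ⟨hmem k, fun h => by simpa using hmem k⁻¹ h⟩) fun _ _ => rfl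
  have hint (x : X) : Integrable (fun k => φ (k • x)) ν :=
    (continuous_of_discreteTopology.comp (continuous_smul.comp (continuous_id.prodMk
      continuous_const) : Continuous fun k : K => k • x)).integrable_of_hasCompactSupport
      (HasCompactSupport.of_compactSpace _)
  calc O.card • ∫ k, φ (k • x₀) ∂ν = ∑ x ∈ O, ∫ k, φ (k • x) ∂ν := by
        rw [Finset.sum_congr rfl hconst, Finset.sum_const]
    _ = ∫ k, ∑ x ∈ O, φ (k • x) ∂ν := (integral_finsetSum O fun x _ => hint x).symm
    _ = ∑ x ∈ O, φ x := by simp only [hsum_smul, integral_const, probReal_univ, one_smul]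

end HaarProbability

section OpenSubgroup

variable {G E : Type*} [Group G] [TopologicalSpace G] [IsTopologicalGroup G] [MeasurableSpace G]
  [BorelSpace G] [NormedAddCommGroup E] [NormedSpace ℝ E] (μ : Measure G) {K : Subgroup G}

theorem measurableSet_preimage_mk_singleton (hK : IsOpen (K : Set G)) (t : G ⧸ K) :
    MeasurableSet (QuotientGroup.mk ⁻¹' {t} : Set G) :=
  have := QuotientGroup.discreteTopology hK
  ((isOpen_discrete {t}).preimage QuotientGroup.continuous_mk).measurableSet

theorem integral_preimage_mk_finset (hK : IsOpen (K : Set G)) (O : Finset (G ⧸ K)) {f : G → E}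
    (hf : IntegrableOn f (QuotientGroup.mk ⁻¹' (O : Set (G ⧸ K))) μ) :
    ∫ x in QuotientGroup.mk ⁻¹' (O : Set (G ⧸ K)), f x ∂μ
      = ∑ t ∈ O, ∫ x in QuotientGroup.mk ⁻¹' {t}, f x ∂μ := by
  rw [← Finset.set_biUnion_preimage_singleton]
  exact integral_biUnion_finset O (fun t _ => measurableSet_preimage_mk_singleton hK t)
    (fun s _ t _ hst => (disjoint_singleton.mpr hst).preimage _)
    fun t ht => hf.mono_set (preimage_mono (singleton_subset_iff.mpr ht))

theorem integral_subgroup_eq_smul_setIntegral [μ.IsHaarMeasure] (hKc : IsCompact (K : Set G))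
    (hKo : IsOpen (K : Set G)) (ν : Measure K) [ν.IsHaarMeasure] [IsProbabilityMeasure ν]
    (φ : G → E) :
    ∫ k : K, φ k ∂ν = (μ K).toReal⁻¹ • ∫ x in K, φ x ∂μ := by
  have hemb : MeasurableEmbedding ((↑) : K → G) := .subtype_coe hKo.measurableSet
  have : CompactSpace K := isCompact_iff_compactSpace.mp hKc
  have hcomap_univ : μ.comap (↑) (univ : Set K) = μ K := by
    rw [hemb.comap_apply, image_univ, Subtype.range_coe]
  have : IsFiniteMeasure (μ.comap ((↑) : K → G)) := ⟨hcomap_univ ▸ hKc.measure_lt_top⟩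
  have : (μ.comap ((↑) : K → G)).IsMulLeftInvariant :=
    IsMulLeftInvariant.comap μ (f := K.subtype) hemb
  have hν : ν = (μ K)⁻¹ • μ.comap (↑) := by
    have h := isMulInvariant_eq_smul_of_compactSpace (μ.comap ((↑) : K → G)) ν
    have hc := congrArg (· univ) h
    simp only [hcomap_univ, Measure.smul_apply, measure_univ, ENNReal.smul_def, smul_eq_mul,
      mul_one] at hc
    rw [h, ENNReal.smul_def, ← hc, smul_smul, ENNReal.inv_mul_cancel
      (hKo.measure_ne_zero μ ⟨1, K.one_mem⟩) hKc.measure_lt_top.ne, one_smul]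
  rw [hν, integral_smul_measure, ENNReal.toReal_inv, ← hemb.integral_map, hemb.map_comap,
    Subtype.range_coe]

variable [μ.IsMulLeftInvariant]

theorem setIntegral_preimage_mk_singleton (f : G → E) (g : G) :
    ∫ x in QuotientGroup.mk ⁻¹' {(g : G ⧸ K)}, f x ∂μ = ∫ y in K, f (g * y) ∂μ := by
  rw [← QuotientGroup.preimage_mul_left_preimage_mk_singleton K g,
    (measurePreserving_mul_left μ g).setIntegral_preimage_emb
      (MeasurableEquiv.mulLeft g).measurableEmbedding]

theorem measure_preimage_mk_singleton (t : G ⧸ K) : μ (QuotientGroup.mk ⁻¹' {t}) = μ K := by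
  obtain ⟨g, rfl⟩ := QuotientGroup.mk_surjective t
  rw [← QuotientGroup.preimage_mul_left_preimage_mk_singleton K g, measure_preimage_mul]

theorem measure_preimage_mk_finset (hK : IsOpen (K : Set G)) (O : Finset (G ⧸ K)) :
    μ (QuotientGroup.mk ⁻¹' (O : Set (G ⧸ K))) = O.card * μ K := by
  rw [← Finset.set_biUnion_preimage_singleton, measure_biUnion_finset
    (fun s _ t _ hst => (disjoint_singleton.mpr hst).preimage _)
    fun t _ => measurableSet_preimage_mk_singleton hK t]
  simp [measure_preimage_mk_singleton]

end OpenSubgroup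

theorem integral_double_coset_general
    {G : Type*} [Group G] [TopologicalSpace G] [IsTopologicalGroup G]
    [MeasurableSpace G] [BorelSpace G]
    (μ : Measure G) [μ.IsHaarMeasure]
    (K : Subgroup G) (hKcompact : IsCompact (K : Set G)) (hKopen : IsOpen (K : Set G))
    (ν : Measure K) [ν.IsHaarMeasure] [IsProbabilityMeasure ν]
    (m : G) (f : G → ℂ)
    (hf : IntegrableOn f {x : G | ∃ k₁ ∈ K, ∃ k₂ ∈ K, x = k₁ * m * k₂} μ) :
    ∫ x in {x : G | ∃ k₁ ∈ K, ∃ k₂ ∈ K, x = k₁ * m * k₂}, f x ∂μ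
      = ((μ {x : G | ∃ k₁ ∈ K, ∃ k₂ ∈ K, x = k₁ * m * k₂}).toReal : ℂ)
          * ∫ k₁ : K, ∫ k₂ : K, f ((k₁ : G) * m * (k₂ : G)) ∂ν ∂ν := by
  have : DiscreteTopology (G ⧸ K) := QuotientGroup.discreteTopology hKopen
  have : CompactSpace K := isCompact_iff_compactSpace.mp hKcompact
  have : ContinuousSMul K (G ⧸ K) := Subgroup.continuousSMul
  have hfin : (MulAction.orbit K (m : G ⧸ K)).Finite :=
    (isCompact_range (continuous_smul.comp (continuous_id.prodMk continuous_const) :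
      Continuous fun k : K => k • (m : G ⧸ K))).finite_of_discrete
  set O := hfin.toFinset
  set J : G ⧸ K → ℂ := fun t => ∫ x in QuotientGroup.mk ⁻¹' {t}, f x ∂μ
  have hS : {x : G | ∃ k₁ ∈ K, ∃ k₂ ∈ K, x = k₁ * m * k₂}
      = QuotientGroup.mk ⁻¹' (O : Set (G ⧸ K)) := by
    rw [hfin.coe_toFinset]
    exact doubleCoset_eq_preimage_mk_orbit K m
  have hinner (k₁ : K) :
      ∫ k₂ : K, f (k₁ * m * k₂) ∂ν = (μ K).toReal⁻¹ • J (k₁ • (m : G ⧸ K)) := by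
    rw [integral_subgroup_eq_smul_setIntegral μ hKcompact hKopen ν (fun y => f (k₁ * m * y))]
    exact congrArg _ (setIntegral_preimage_mk_singleton μ f (k₁ * m)).symm
  have horbit := card_smul_integral_smul_eq_sum_orbit ν (m : G ⧸ K) O hfin.coe_toFinset J
  have hμK : (μ K).toReal ≠ 0 := ENNReal.toReal_ne_zero.mpr
    ⟨hKopen.measure_ne_zero μ ⟨1, K.one_mem⟩, hKcompact.measure_lt_top.ne⟩
  rw [hS] at hf ⊢
  rw [integral_preimage_mk_finset μ hKopen O hf, measure_preimage_mk_finset μ hKopen O,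
    integral_congr_ae (ae_of_all _ hinner), integral_smul, ← horbit]
  simp only [ENNReal.toReal_mul, ENNReal.toReal_natCast, nsmul_eq_mul, Complex.real_smul]
  push_cast
  rw [mul_assoc, mul_inv_cancel_left₀ (Complex.ofReal_ne_zero.mpr hμK)]

/-- Let `G` be a locally compact Hausdorff unimodular topological group with Haar measure `μ`,
and `K` a compact open subgroup equipped with its Haar probability measure `ν`.  Then for every
`m ∈ G` and every `f : G → ℂ` integrable on the double coset `KmK`, one has
`∫_{KmK} f dμ = μ(KmK) · ∫_K ∫_K f(k₁ m k₂) dk₁ dk₂`. -/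
theorem integral_double_coset
    {G : Type*} [Group G] [TopologicalSpace G] [IsTopologicalGroup G]
    [T2Space G] [LocallyCompactSpace G]
    [MeasurableSpace G] [BorelSpace G]
    (μ : Measure G) [μ.IsHaarMeasure] [μ.IsMulRightInvariant]
    (K : Subgroup G) (hKcompact : IsCompact (K : Set G)) (hKopen : IsOpen (K : Set G))
    (ν : Measure K) [ν.IsHaarMeasure] [IsProbabilityMeasure ν]
    (m : G) (f : G → ℂ)
    (hf : IntegrableOn f {x : G | ∃ k₁ ∈ K, ∃ k₂ ∈ K, x = k₁ * m * k₂} μ) :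
    ∫ x in {x : G | ∃ k₁ ∈ K, ∃ k₂ ∈ K, x = k₁ * m * k₂}, f x ∂μ
      = ((μ {x : G | ∃ k₁ ∈ K, ∃ k₂ ∈ K, x = k₁ * m * k₂}).toReal : ℂ)
          * ∫ k₁ : K, ∫ k₂ : K, f ((k₁ : G) * m * (k₂ : G)) ∂ν ∂ν :=
  integral_double_coset_general μ K hKcompact hKopen ν m f hf
end

section
/- Let G be a locally compact Hausdorff unimodular topological group with Haar measure μ, K a compact open subgroup of G with Haar probability measure dk, and S a countable subset of G such that G is the disjoint union of the double cosets KmK for m ∈ S. Then for every f ∈ L¹(G, μ), ∫_G f(x) dμ(x) = Σ_{m ∈ S} μ(KmK) · ∫_K ∫_K f(k₁ m k₂) dk₁ dk₂, with the sum converging absolutely. -/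
/-!
Because `K` is open, the stabilizer `H` of the coset `mK` in `K` is an open subgroup of finite
index, and `KmK` is the disjoint union of the `[K : H]` left cosets `k m K`, `k ∈ K ⧸ H`, each
of measure `μ K`. Integrating `f` over `k m K` is `μ K` times the `ν`-average of `f (k m ·)`,
and this average is a right `H`-invariant function of `k`; since `ν` gives every coset of `H`
mass `[K : H]⁻¹`, the sum over `K ⧸ H` is `[K : H]` times the `ν`-integral. Summing the
resulting formula `∫_{KmK} f dμ = μ(KmK) ∫∫ f(k₁ m k₂)` over the countable partition of `G`
into double cosets gives the theorem.
-/

open MeasureTheory Pointwise Function DoubleCoset MulAction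

theorem QuotientGroup.preimage_mk_singleton_mk {α : Type*} [Group α] (s : Subgroup α) (x : α) :
    QuotientGroup.mk ⁻¹' {(x : α ⧸ s)} = x • (s : Set α) := by
  ext y
  simp [QuotientGroup.eq, mem_leftCoset_iff, ← inv_mem_iff (x := y⁻¹ * x)]

section CompactGroup

variable {L E : Type*} [Group L] [MeasurableSpace L] [MeasurableMul L]
  [NormedAddCommGroup E] [NormedSpace ℝ E] [CompleteSpace E]

theorem Subgroup.sum_out_eq_index_smul_integral (ν : Measure L) [ν.IsMulLeftInvariant]
    [IsProbabilityMeasure ν] (H : Subgroup L) [Fintype (L ⧸ H)] (hH : MeasurableSet (H : Set L))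
    {φ : L → E} (hφ : ∀ x, ∀ h ∈ H, φ (x * h) = φ x) :
    ∑ q : L ⧸ H, φ q.out = (H.index : ℝ) • ∫ x, φ x ∂ν := by
  have := Subgroup.finiteIndex_of_finite_quotient (H := H)
  have hfiber : ∀ q : L ⧸ H, MeasurableSet (q.out • (H : Set L)) := fun q ↦ hH.const_smul _
  have hconst : ∀ q : L ⧸ H, Set.EqOn φ (fun _ ↦ φ q.out) (q.out • (H : Set L)) := by
    intro q x hx
    simpa using hφ q.out _ ((mem_leftCoset_iff _).1 hx)
  have hmeasure : ∀ q : L ⧸ H, ν.real (q.out • (H : Set L)) = (H.index : ℝ)⁻¹ := by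
    intro q
    have h := H.index_mul_measure hH ν
    rw [measure_univ, mul_comm] at h
    rw [measureReal_def, measure_smul, ENNReal.eq_inv_of_mul_eq_one_left h, ENNReal.toReal_inv,
      ENNReal.toReal_natCast]
  have hdisj : Pairwise (Disjoint on fun q : L ⧸ H ↦ q.out • (H : Set L)) := by
    intro q q' hne
    simp only [onFun]
    rw [← QuotientGroup.preimage_mk_singleton_mk, ← QuotientGroup.preimage_mk_singleton_mk,
      QuotientGroup.out_eq', QuotientGroup.out_eq']
    exact (Set.disjoint_singleton.2 hne).preimage _
  calc ∑ q : L ⧸ H, φ q.out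
      = ∑ q : L ⧸ H, (H.index : ℝ) • ∫ x in q.out • (H : Set L), φ x ∂ν := by
        refine Finset.sum_congr rfl fun q _ ↦ ?_
        rw [setIntegral_congr_fun (hfiber q) (hconst q), setIntegral_const, hmeasure, smul_smul,
          mul_inv_cancel₀ (by exact_mod_cast Subgroup.FiniteIndex.index_ne_zero), one_smul]
    _ = (H.index : ℝ) • ∫ x, φ x ∂ν := by
        rw [← Finset.smul_sum, ← integral_iUnion_fintype hfiber hdisj,
          ← QuotientGroup.univ_eq_iUnion_smul, Measure.restrict_univ]
        intro q
        exact (integrableOn_const (measure_ne_top ν _)).congr_fun (hconst q).symm (hfiber q)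

end CompactGroup

section DoubleCoset

variable {G : Type*} [Group G] {K : Subgroup G}

theorem mem_stabilizer_mk_iff {m : G} {h : K} :
    h ∈ stabilizer K (m : G ⧸ K) ↔ m⁻¹ * h * m ∈ K := by
  change ((h * m : G) : G ⧸ K) = m ↔ _
  rw [QuotientGroup.eq, ← inv_mem_iff]
  simp [mul_assoc]

theorem doubleCoset_eq_iUnion_out_mul_smul (m : G) :
    doubleCoset m K K = ⋃ q : K ⧸ stabilizer K (m : G ⧸ K), ((q.out : G) * m) • (K : Set G) := by
  ext y
  simp only [mem_doubleCoset, Set.mem_iUnion, mem_leftCoset_iff, SetLike.mem_coe]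
  constructor
  · rintro ⟨k₁, hk₁, k₂, hk₂, rfl⟩
    obtain ⟨h, hq⟩ := QuotientGroup.mk_out_eq_mul (stabilizer K (m : G ⧸ K)) ⟨k₁, hk₁⟩
    refine ⟨(⟨k₁, hk₁⟩ : K), ?_⟩
    rw [hq]
    convert K.mul_mem (K.inv_mem (mem_stabilizer_mk_iff.1 h.2)) hk₂ using 1
    simp [mul_assoc]
  · rintro ⟨q, hq⟩
    exact ⟨q.out, q.out.2, _, hq, by group⟩

theorem pairwise_disjoint_out_mul_smul (m : G) :
    Pairwise (Disjoint on
      fun q : K ⧸ stabilizer K (m : G ⧸ K) ↦ ((q.out : G) * m) • (K : Set G)) := by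
  intro q q' hne
  simp only [onFun, ← QuotientGroup.preimage_mk_singleton_mk]
  refine (Set.disjoint_singleton.2 fun h ↦ hne ?_).preimage _
  rw [QuotientGroup.eq] at h
  rw [← QuotientGroup.out_eq' q, ← QuotientGroup.out_eq' q', QuotientGroup.eq,
    mem_stabilizer_mk_iff]
  convert h using 1
  simp [mul_assoc]

variable [TopologicalSpace G] [IsTopologicalGroup G]

theorem isOpen_stabilizer_mk (hK : IsOpen (K : Set G)) (m : G) :
    IsOpen (stabilizer K (m : G ⧸ K) : Set K) :=
  have := QuotientGroup.discreteTopology hK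
  (isOpen_discrete {(m : G ⧸ K)}).preimage (f := fun k : K ↦ ((k * m : G) : G ⧸ K))
    (by fun_prop)

variable [CompactSpace K]

theorem finite_quotient_stabilizer_mk (hK : IsOpen (K : Set G)) (m : G) :
    Finite (K ⧸ stabilizer K (m : G ⧸ K)) :=
  Subgroup.quotient_finite_of_isOpen _ (isOpen_stabilizer_mk hK m)

variable [MeasurableSpace G] [BorelSpace G]

theorem measure_doubleCoset (μ : Measure G) [μ.IsMulLeftInvariant] (hK : IsOpen (K : Set G))
    (m : G) :
    μ (doubleCoset m K K) = (stabilizer K (m : G ⧸ K)).index * μ K := by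
  have := finite_quotient_stabilizer_mk hK m
  have := Fintype.ofFinite (K ⧸ stabilizer K (m : G ⧸ K))
  rw [doubleCoset_eq_iUnion_out_mul_smul, measure_iUnion (pairwise_disjoint_out_mul_smul m)
    fun q ↦ hK.measurableSet.const_smul _]
  simp [measure_smul, tsum_fintype, Subgroup.index_eq_card]

variable {E : Type*} [NormedAddCommGroup E] [NormedSpace ℝ E]
  {μ : Measure G} [μ.IsHaarMeasure]
  (ν : Measure K) [ν.IsHaarMeasure] [IsProbabilityMeasure ν]

theorem comap_subtype_val_eq_smul (hK : IsOpen (K : Set G)) : μ.comap (↑) = μ K • ν := by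
  have : BorelSpace K := Subtype.borelSpace _
  have : (μ.comap ((↑) : K → G)).IsHaarMeasure :=
    Measure.IsHaarMeasure.comap μ (f := K.subtype) (mH := inferInstance)
      hK.isOpenEmbedding_subtypeVal
  have h := Measure.isMulInvariant_eq_smul_of_compactSpace (μ.comap ((↑) : K → G)) ν
  have hc : (Measure.haarScalarFactor (μ.comap ((↑) : K → G)) ν : ENNReal) = μ K := by
    have huniv : μ.comap ((↑) : K → G) Set.univ = μ K :=
      (hK.isOpenEmbedding_subtypeVal.measurableEmbedding.comap_apply μ Set.univ).trans (by simp)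
    simpa [huniv] using (congrArg (· Set.univ) h).symm
  rw [h, ← hc]
  ext s _
  simp

theorem setIntegral_leftCoset (hK : IsOpen (K : Set G)) (f : G → E) (x : G) :
    ∫ y in x • (K : Set G), f y ∂μ = μ.real K • ∫ k, f (x * k) ∂ν := by
  have hsub : ∫ y in (K : Set G), f (x * y) ∂μ = ∫ k : K, f (x * k) ∂(μ.comap (↑)) :=
    (integral_subtype_comap hK.measurableSet (fun y ↦ f (x * y))).symm
  rw [← Set.image_smul, (measurePreserving_smul x μ).setIntegral_image_emb
    (measurableEmbedding_const_smul x)]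
  simp only [smul_eq_mul]
  rw [hsub, comap_subtype_val_eq_smul ν hK, integral_smul_measure]
  rfl

theorem setIntegral_doubleCoset [CompleteSpace E] (hK : IsOpen (K : Set G)) {f : G → E} {m : G}
    (hf : IntegrableOn f (doubleCoset m K K) μ) :
    ∫ x in doubleCoset m K K, f x ∂μ
      = μ.real (doubleCoset m K K) • ∫ k₁, ∫ k₂, f (k₁ * m * k₂) ∂ν ∂ν := by
  have : BorelSpace K := Subtype.borelSpace _
  set H := stabilizer K (m : G ⧸ K)
  have := finite_quotient_stabilizer_mk hK m
  have := Fintype.ofFinite (K ⧸ H)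
  have hH : MeasurableSet (H : Set K) := (isOpen_stabilizer_mk hK m).measurableSet
  have hinv : ∀ k₁, ∀ h ∈ H, ∫ k₂, f (↑(k₁ * h) * m * k₂) ∂ν = ∫ k₂, f (k₁ * m * k₂) ∂ν := by
    intro k₁ h hh
    rw [← integral_mul_left_eq_self (fun k₂ : K ↦ f (k₁ * m * k₂))
      ⟨_, mem_stabilizer_mk_iff.1 hh⟩]
    simp [mul_assoc]
  calc ∫ x in doubleCoset m K K, f x ∂μ
      = ∑ q : K ⧸ H, ∫ x in ((q.out : G) * m) • (K : Set G), f x ∂μ := by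
        rw [doubleCoset_eq_iUnion_out_mul_smul] at hf ⊢
        exact integral_iUnion_fintype (fun q ↦ hK.measurableSet.const_smul _)
          (pairwise_disjoint_out_mul_smul m)
          fun q ↦ hf.mono_set (Set.subset_iUnion_of_subset q subset_rfl)
    _ = μ.real K • ∑ q : K ⧸ H, ∫ k₂, f (q.out * m * k₂) ∂ν := by
        simp only [setIntegral_leftCoset ν hK, Finset.smul_sum]
    _ = μ.real (doubleCoset m K K) • ∫ k₁, ∫ k₂, f (k₁ * m * k₂) ∂ν ∂ν := by
        rw [H.sum_out_eq_index_smul_integral ν hH (φ := fun k₁ ↦ ∫ k₂, f (k₁ * m * k₂) ∂ν) hinv,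
          smul_smul, measureReal_def, measureReal_def, measure_doubleCoset μ hK,
          ENNReal.toReal_mul, ENNReal.toReal_natCast, mul_comm]

end DoubleCoset

theorem hasSum_setIntegral_of_iUnion_eq_univ {X E ι : Type*} [MeasurableSpace X]
    [NormedAddCommGroup E] [NormedSpace ℝ E] [Countable ι] {μ : Measure X} {s : ι → Set X}
    (hs : ∀ i, MeasurableSet (s i)) (hd : Pairwise (Disjoint on s)) (hU : ⋃ i, s i = Set.univ)
    {f : X → E} (hf : Integrable f μ) :
    HasSum (fun i ↦ ∫ x in s i, f x ∂μ) (∫ x, f x ∂μ) := by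
  simpa [hU] using hasSum_integral_iUnion hs hd (hU ▸ hf.integrableOn)

theorem integral_eq_tsum_double_cosets_general
    {G : Type*} [Group G] [TopologicalSpace G] [IsTopologicalGroup G]
    [MeasurableSpace G] [BorelSpace G]
    (μ : Measure G) [μ.IsHaarMeasure]
    (K : Subgroup G) (hKcompact : IsCompact (K : Set G)) (hKopen : IsOpen (K : Set G))
    (ν : Measure K) [ν.IsHaarMeasure] [IsProbabilityMeasure ν]
    (S : Set G) (hScount : S.Countable)
    (hcover : ∀ x : G, ∃ m ∈ S, ∃ k₁ ∈ K, ∃ k₂ ∈ K, x = k₁ * m * k₂)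
    (hdisj : ∀ m ∈ S, ∀ m' ∈ S, m ≠ m' →
      Disjoint {x : G | ∃ k₁ ∈ K, ∃ k₂ ∈ K, x = k₁ * m * k₂}
        {x : G | ∃ k₁ ∈ K, ∃ k₂ ∈ K, x = k₁ * m' * k₂})
    (f : G → ℂ) (hf : Integrable f μ) :
    (∫ x, f x ∂μ
       = ∑' m : S, ((μ {x : G | ∃ k₁ ∈ K, ∃ k₂ ∈ K, x = k₁ * (m : G) * k₂}).toReal : ℂ)
           * ∫ k₁ : K, ∫ k₂ : K, f ((k₁ : G) * (m : G) * (k₂ : G)) ∂ν ∂ν)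
    ∧ Summable (fun m : S =>
        (μ {x : G | ∃ k₁ ∈ K, ∃ k₂ ∈ K, x = k₁ * (m : G) * k₂}).toReal
          * ‖∫ k₁ : K, ∫ k₂ : K, f ((k₁ : G) * (m : G) * (k₂ : G)) ∂ν ∂ν‖) := by
  have := isCompact_iff_compactSpace.mp hKcompact
  have := hScount.to_subtype
  have hD (m : G) : {x : G | ∃ k₁ ∈ K, ∃ k₂ ∈ K, x = k₁ * m * k₂} = doubleCoset m K K :=
    Set.ext fun _ ↦ mem_doubleCoset.symm
  simp only [hD] at hdisj ⊢
  have hpartition {E : Type} [NormedAddCommGroup E] [NormedSpace ℝ E] {g : G → E}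
      (hg : Integrable g μ) :
      HasSum (fun m : S ↦ ∫ x in doubleCoset (m : G) K K, g x ∂μ) (∫ x, g x ∂μ) :=
    hasSum_setIntegral_of_iUnion_eq_univ (s := fun m : S ↦ doubleCoset (m : G) K K)
      (fun _ ↦ hKopen.mul_left.measurableSet)
      (fun m m' hne ↦ hdisj m m.2 m' m'.2 (Subtype.coe_injective.ne hne))
      (Set.iUnion_eq_univ_iff.2 fun x ↦ by
        obtain ⟨m, hm, hx⟩ := hcover x
        exact ⟨⟨m, hm⟩, mem_doubleCoset.2 hx⟩) hg
  have hcoset (m : G) := setIntegral_doubleCoset ν hKopen (m := m) hf.integrableOn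
  refine ⟨?_, ?_⟩
  · simp only [← Complex.real_smul, ← measureReal_def, ← hcoset]
    exact (hpartition hf).tsum_eq.symm
  · refine (hpartition hf.norm).summable.of_nonneg_of_le (fun _ ↦ by positivity) fun m ↦ ?_
    calc _ = ‖∫ x in doubleCoset m K K, f x ∂μ‖ := by
          rw [hcoset, norm_smul, Real.norm_of_nonneg measureReal_nonneg, measureReal_def]
      _ ≤ ∫ x in doubleCoset m K K, ‖f x‖ ∂μ := norm_integral_le_integral_norm _

/-- Let `G` be a locally compact Hausdorff unimodular topological group with Haar measure `μ`,
`K` a compact open subgroup with Haar probability measure `ν`, and `S` a countable subset of `G`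
such that `G` is the disjoint union of the double cosets `KmK`, `m ∈ S`.  Then for every
`f ∈ L¹(G, μ)`,
`∫_G f dμ = Σ_{m ∈ S} μ(KmK) · ∫_K ∫_K f(k₁ m k₂) dk₁ dk₂`,
with the sum converging absolutely. -/
theorem integral_eq_tsum_double_cosets
    {G : Type*} [Group G] [TopologicalSpace G] [IsTopologicalGroup G]
    [T2Space G] [LocallyCompactSpace G]
    [MeasurableSpace G] [BorelSpace G]
    (μ : Measure G) [μ.IsHaarMeasure] [μ.IsMulRightInvariant]
    (K : Subgroup G) (hKcompact : IsCompact (K : Set G)) (hKopen : IsOpen (K : Set G))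
    (ν : Measure K) [ν.IsHaarMeasure] [IsProbabilityMeasure ν]
    (S : Set G) (hScount : S.Countable)
    (hcover : ∀ x : G, ∃ m ∈ S, ∃ k₁ ∈ K, ∃ k₂ ∈ K, x = k₁ * m * k₂)
    (hdisj : ∀ m ∈ S, ∀ m' ∈ S, m ≠ m' →
      Disjoint {x : G | ∃ k₁ ∈ K, ∃ k₂ ∈ K, x = k₁ * m * k₂}
        {x : G | ∃ k₁ ∈ K, ∃ k₂ ∈ K, x = k₁ * m' * k₂})
    (f : G → ℂ) (hf : Integrable f μ) :
    (∫ x, f x ∂μ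
       = ∑' m : S, ((μ {x : G | ∃ k₁ ∈ K, ∃ k₂ ∈ K, x = k₁ * (m : G) * k₂}).toReal : ℂ)
           * ∫ k₁ : K, ∫ k₂ : K, f ((k₁ : G) * (m : G) * (k₂ : G)) ∂ν ∂ν)
    ∧ Summable (fun m : S =>
        (μ {x : G | ∃ k₁ ∈ K, ∃ k₂ ∈ K, x = k₁ * (m : G) * k₂}).toReal
          * ‖∫ k₁ : K, ∫ k₂ : K, f ((k₁ : G) * (m : G) * (k₂ : G)) ∂ν ∂ν‖) :=
  integral_eq_tsum_double_cosets_general μ K hKcompact hKopen ν S hScount hcover hdisj f hf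
end

section
/- Suppose B is nondegenerate on W and that there is no nonzero ρ-invariant subspace U of W with U ⊆ U⊥ (i.e. no nonzero totally isotropic invariant subspace). Then W decomposes as a direct sum W = W₁ ⊕ W₂ ⊕ ⋯ ⊕ W_k of pairwise B-orthogonal ρ-invariant subspaces such that the restriction of B to each Wᵢ is nondegenerate and Γ acts irreducibly on each Wᵢ. -/
open Module

/-- Left orthogonal complement of a subspace w.r.t. a bilinear form. -/
def lorth {F W : Type*} [Field F] [AddCommGroup W] [Module F W]
    (B : LinearMap.BilinForm F W) (U : Submodule F W) : Submodule F W where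
  carrier := {v | ∀ u ∈ U, B v u = 0}
  add_mem' := by
    intro a b ha hb u hu
    simp [ha u hu, hb u hu]
  zero_mem' := by simp
  smul_mem' := by
    intro t a ha u hu
    simp [ha u hu]

lemma mem_lorth {F W : Type*} [Field F] [AddCommGroup W] [Module F W]
    {B : LinearMap.BilinForm F W} {U : Submodule F W} {v : W} :
    v ∈ lorth B U ↔ ∀ u ∈ U, B v u = 0 := Iff.rfl

lemma decomp_aux
    {F W : Type*} [Field F] [AddCommGroup W] [Module F W] [FiniteDimensional F W]
    {Γ : Type*} [Group Γ]
    (B : LinearMap.BilinForm F W)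
    (hrefl : ∀ v w : W, B v w = 0 → B w v = 0)
    (ρ : Γ →* (W →ₗ[F] W)ˣ)
    (c : Γ → F) (hc : ∀ γ, c γ ≠ 0)
    (hsim : ∀ γ : Γ, ∀ v w : W,
      B ((ρ γ : W →ₗ[F] W) v) ((ρ γ : W →ₗ[F] W) w) = c γ * B v w)
    (hnoiso : ∀ U : Submodule F W,
      (∀ γ : Γ, ∀ u ∈ U, (ρ γ : W →ₗ[F] W) u ∈ U) →
      (∀ u ∈ U, ∀ u' ∈ U, B u u' = 0) → U = ⊥) :
    ∀ n (V : Submodule F W), Module.finrank F V ≤ n →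
      (∀ γ : Γ, ∀ v ∈ V, (ρ γ : W →ₗ[F] W) v ∈ V) →
      (∀ v ∈ V, (∀ w ∈ V, B v w = 0) → v = 0) →
    ∃ (k : ℕ) (Wi : Fin k → Submodule F W),
      (⨆ i, Wi i) = V ∧
      (∀ i j : Fin k, i ≠ j → ∀ v ∈ Wi i, ∀ w ∈ Wi j, B v w = 0) ∧
      (∀ i : Fin k, ∀ v ∈ Wi i, (∀ w ∈ Wi i, B v w = 0) → v = 0) ∧
      (∀ i : Fin k, ∀ γ : Γ, ∀ v ∈ Wi i, (ρ γ : W →ₗ[F] W) v ∈ Wi i) ∧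
      (∀ i : Fin k, Wi i ≠ ⊥) ∧
      (∀ i : Fin k, ∀ U : Submodule F W, U ≤ Wi i →
        (∀ γ : Γ, ∀ u ∈ U, (ρ γ : W →ₗ[F] W) u ∈ U) → U = ⊥ ∨ U = Wi i) := by
  -- helper: applying ρ γ to ρ γ⁻¹ v gives v
  have hinv : ∀ γ : Γ, ∀ v : W, (ρ γ : W →ₗ[F] W) ((ρ γ⁻¹ : W →ₗ[F] W) v) = v := by
    intro γ v
    have : (ρ γ * ρ γ⁻¹ : (W →ₗ[F] W)ˣ) = 1 := by
      rw [← map_mul, mul_inv_cancel, map_one]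
    calc (ρ γ : W →ₗ[F] W) ((ρ γ⁻¹ : W →ₗ[F] W) v)
        = ((ρ γ * ρ γ⁻¹ : (W →ₗ[F] W)ˣ) : W →ₗ[F] W) v := rfl
      _ = v := by rw [this]; rfl
  intro n
  induction n with
  | zero =>
    intro V hV _ _
    refine ⟨0, Fin.elim0, ?_, ?_, ?_, ?_, ?_, ?_⟩
    · have : V = ⊥ := Submodule.finrank_eq_zero.mp (Nat.le_zero.mp hV)
      simp [this]
    all_goals exact fun i => i.elim0
  | succ n ih =>
    intro V hV hVinv hVnd
    by_cases hVbot : V = ⊥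
    · refine ⟨0, Fin.elim0, ?_, ?_, ?_, ?_, ?_, ?_⟩
      · simp [hVbot]
      all_goals exact fun i => i.elim0
    -- choose a minimal nonzero invariant subspace U of V
    set S : Set ℕ := {m | ∃ U : Submodule F W, U ≤ V ∧ U ≠ ⊥ ∧
        (∀ γ : Γ, ∀ u ∈ U, (ρ γ : W →ₗ[F] W) u ∈ U) ∧ Module.finrank F U = m} with hS
    have hSne : S.Nonempty := ⟨Module.finrank F V, V, le_rfl, hVbot, hVinv, rfl⟩
    obtain ⟨U, hUV, hUbot, hUinv, hUrank⟩ := Nat.sInf_mem hSne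
    have hUmin : ∀ U' : Submodule F W, U' ≤ U →
        (∀ γ : Γ, ∀ u ∈ U', (ρ γ : W →ₗ[F] W) u ∈ U') → U' = ⊥ ∨ U' = U := by
      intro U' hle hinv'
      by_cases h : U' = ⊥
      · exact Or.inl h
      · right
        have : Module.finrank F U ≤ Module.finrank F U' := by
          rw [hUrank]
          exact Nat.sInf_le ⟨U', hle.trans hUV, h, hinv', rfl⟩
        exact Submodule.eq_of_le_of_finrank_le hle this
    -- B restricted to U is nondegenerate
    have hUnd : ∀ v ∈ U, (∀ w ∈ U, B v w = 0) → v = 0 := by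
      intro v hv hvw
      have hrad : U ⊓ lorth B U = ⊥ := by
        apply hnoiso
        · intro γ u hu
          refine ⟨hUinv γ u hu.1, ?_⟩
          intro w hw
          have hw' : (ρ γ⁻¹ : W →ₗ[F] W) w ∈ U := hUinv γ⁻¹ w hw
          have := hsim γ u ((ρ γ⁻¹ : W →ₗ[F] W) w)
          rw [hinv γ w] at this
          rw [this, hu.2 _ hw', mul_zero]
        · intro u hu u' hu'
          exact hu.2 u' hu'.1
      have : v ∈ U ⊓ lorth B U := ⟨hv, hvw⟩
      rw [hrad] at this
      exact this
    -- the orthogonal complement of U inside V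
    set V' : Submodule F W := V ⊓ lorth B U with hV'def
    have hV'inv : ∀ γ : Γ, ∀ v ∈ V', (ρ γ : W →ₗ[F] W) v ∈ V' := by
      intro γ v hv
      refine ⟨hVinv γ v hv.1, ?_⟩
      intro u hu
      have hu' : (ρ γ⁻¹ : W →ₗ[F] W) u ∈ U := hUinv γ⁻¹ u hu
      have := hsim γ v ((ρ γ⁻¹ : W →ₗ[F] W) u)
      rw [hinv γ u] at this
      rw [this, hv.2 _ hu', mul_zero]
    -- V = U ⊔ V'
    have hsup : U ⊔ V' = V := by
      apply le_antisymm (sup_le hUV inf_le_left)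
      intro v hv
      -- find u₀ ∈ U with B u₀ ∙ = B v ∙ on U
      let r : U →ₗ[F] Module.Dual F U :=
        { toFun := fun u => (B u.1).comp U.subtype
          map_add' := by intro a b; ext w; simp
          map_smul' := by intro t a; ext w; simp }
      have hrinj : Function.Injective r := by
        rw [← LinearMap.ker_eq_bot, LinearMap.ker_eq_bot']
        intro u hu
        have : (u : W) = 0 := by
          apply hUnd u u.2
          intro w hw
          have := congrFun (congrArg DFunLike.coe hu) ⟨w, hw⟩
          simpa [r] using this
        exact Subtype.ext this
      have hrsurj : Function.Surjective r :=
        (LinearMap.injective_iff_surjective_of_finrank_eq_finrank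
          (Subspace.dual_finrank_eq).symm).mp hrinj
      obtain ⟨u₀, hu₀⟩ := hrsurj ((B v).comp U.subtype)
      have hv' : v - u₀ ∈ V' := by
        refine ⟨V.sub_mem hv (hUV u₀.2), ?_⟩
        intro u hu
        have := congrFun (congrArg DFunLike.coe hu₀) ⟨u, hu⟩
        simp only [r, LinearMap.coe_mk, AddHom.coe_mk, LinearMap.comp_apply,
          Submodule.subtype_apply] at this
        simp [map_sub, this]
      have : v = (u₀ : W) + (v - u₀) := by abel
      rw [this]
      exact Submodule.add_mem_sup u₀.2 hv'
    have hinf : U ⊓ V' = ⊥ := by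
      rw [eq_bot_iff]
      intro x hx
      have : x = 0 := hUnd x hx.1 (fun w hw => hx.2.2 w hw)
      simp [this]
    -- rank bound for V'
    have hUpos : 0 < Module.finrank F U := by
      rcases Nat.eq_zero_or_pos (Module.finrank F U) with h | h
      · exact absurd (Submodule.finrank_eq_zero.mp h) hUbot
      · exact h
    have hV'rank : Module.finrank F V' ≤ n := by
      have := Submodule.finrank_sup_add_finrank_inf_eq U V'
      rw [hsup, hinf] at this
      simp only [finrank_bot, add_zero] at this
      omega
    -- nondegeneracy of B on V'
    have hV'nd : ∀ v ∈ V', (∀ w ∈ V', B v w = 0) → v = 0 := by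
      intro v hv hvw
      apply hVnd v hv.1
      intro w hw
      rw [← hsup] at hw
      obtain ⟨u, hu, w', hw', rfl⟩ := Submodule.mem_sup.mp hw
      rw [map_add, hv.2 u hu, hvw w' hw', add_zero]
    obtain ⟨k, Wi', hsup', horth', hnd', hinv', hbot', hirr'⟩ :=
      ih V' hV'rank hV'inv hV'nd
    -- assemble
    refine ⟨k + 1, Fin.cons U Wi', ?_, ?_, ?_, ?_, ?_, ?_⟩
    · apply le_antisymm
      · apply iSup_le
        intro i
        refine Fin.cases ?_ ?_ i
        · exact hUV
        · intro j
          have : Wi' j ≤ V' := le_iSup Wi' j |>.trans hsup'.le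
          exact this.trans inf_le_left
      · rw [← hsup]
        apply sup_le
        · exact le_iSup (Fin.cons U Wi' : Fin (k+1) → Submodule F W) 0
        · rw [← hsup']
          apply iSup_le
          intro j
          exact le_iSup (Fin.cons U Wi' : Fin (k+1) → Submodule F W) j.succ
    · -- orthogonality
      have key : ∀ j : Fin k, ∀ v ∈ Wi' j, ∀ u ∈ U, B v u = 0 := by
        intro j v hv u hu
        have : Wi' j ≤ V' := le_iSup Wi' j |>.trans hsup'.le
        exact (this hv).2 u hu
      intro i j hij v hv w hw
      rcases Fin.eq_zero_or_eq_succ i with rfl | ⟨i', rfl⟩ <;>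
        rcases Fin.eq_zero_or_eq_succ j with rfl | ⟨j', rfl⟩
      · exact absurd rfl hij
      · rw [Fin.cons_zero] at hv; rw [Fin.cons_succ] at hw
        exact hrefl _ _ (key j' w hw v hv)
      · rw [Fin.cons_succ] at hv; rw [Fin.cons_zero] at hw
        exact key i' v hv w hw
      · rw [Fin.cons_succ] at hv; rw [Fin.cons_succ] at hw
        have hij' : i' ≠ j' := fun h => hij (by rw [h])
        exact horth' i' j' hij' v hv w hw
    · intro i
      refine Fin.cases ?_ ?_ i
      · exact hUnd
      · exact hnd'
    · intro i
      refine Fin.cases ?_ ?_ i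
      · exact fun γ v hv => hUinv γ v hv
      · exact fun j γ v hv => hinv' j γ v hv
    · intro i
      refine Fin.cases ?_ ?_ i
      · exact hUbot
      · exact hbot'
    · intro i
      refine Fin.cases ?_ ?_ i
      · exact fun U' h1 h2 => hUmin U' h1 h2
      · exact fun j U' h1 h2 => hirr' j U' h1 h2

/-- Let `F` be a field, `W` a finite-dimensional `F`-vector space, `B` a reflexive nondegenerate
bilinear form on `W`, and `ρ : Γ → GL(W)` a representation acting by similitudes of `B`.
Suppose there is no nonzero totally isotropic `ρ`-invariant subspace of `W`.  Then `W` decomposes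
as a direct sum `W = W₁ ⊕ ⋯ ⊕ W_k` of pairwise `B`-orthogonal `ρ`-invariant subspaces such that
`B` restricted to each `Wᵢ` is nondegenerate and `Γ` acts irreducibly on each `Wᵢ`. -/
theorem decomposition_into_orthogonal_irreducibles
    {F W : Type*} [Field F] [AddCommGroup W] [Module F W] [FiniteDimensional F W]
    {Γ : Type*} [Group Γ]
    (B : LinearMap.BilinForm F W)
    (hrefl : ∀ v w : W, B v w = 0 → B w v = 0)
    (hnd : ∀ v : W, (∀ w : W, B v w = 0) → v = 0)
    (ρ : Γ →* (W →ₗ[F] W)ˣ)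
    (c : Γ → F) (hc : ∀ γ, c γ ≠ 0)
    (hsim : ∀ γ : Γ, ∀ v w : W,
      B ((ρ γ : W →ₗ[F] W) v) ((ρ γ : W →ₗ[F] W) w) = c γ * B v w)
    (hnoiso : ∀ U : Submodule F W,
      (∀ γ : Γ, ∀ u ∈ U, (ρ γ : W →ₗ[F] W) u ∈ U) →
      (∀ u ∈ U, ∀ u' ∈ U, B u u' = 0) → U = ⊥) :
    ∃ (k : ℕ) (Wi : Fin k → Submodule F W),
      DirectSum.IsInternal Wi ∧
      (∀ i j : Fin k, i ≠ j → ∀ v ∈ Wi i, ∀ w ∈ Wi j, B v w = 0) ∧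
      (∀ i : Fin k, ∀ v ∈ Wi i, (∀ w ∈ Wi i, B v w = 0) → v = 0) ∧
      (∀ i : Fin k, ∀ γ : Γ, ∀ v ∈ Wi i, (ρ γ : W →ₗ[F] W) v ∈ Wi i) ∧
      (∀ i : Fin k, Wi i ≠ ⊥) ∧
      (∀ i : Fin k, ∀ U : Submodule F W, U ≤ Wi i →
        (∀ γ : Γ, ∀ u ∈ U, (ρ γ : W →ₗ[F] W) u ∈ U) → U = ⊥ ∨ U = Wi i) := by
  obtain ⟨k, Wi, hsup, horth, hndi, hinvi, hboti, hirri⟩ :=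
    decomp_aux B hrefl ρ c hc hsim hnoiso (Module.finrank F (⊤ : Submodule F W)) ⊤
      le_rfl (fun γ v _ => trivial) (fun v _ h => hnd v (fun w => h w trivial))
  refine ⟨k, Wi, ?_, horth, hndi, hinvi, hboti, hirri⟩
  rw [DirectSum.isInternal_submodule_iff_iSupIndep_and_iSup_eq_top]
  refine ⟨?_, hsup⟩
  intro i
  rw [disjoint_iff, eq_bot_iff]
  rintro x ⟨hxi, hxrest⟩
  have hle : (⨆ j, ⨆ (_ : j ≠ i), Wi j) ≤ lorth B (Wi i) := by
    apply iSup_le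
    intro j
    apply iSup_le
    intro hj v hv u hu
    exact horth j i hj v hv u hu
  have : B x = 0 → x = 0 := fun h => hndi i x hxi (fun w _ => by rw [h]; rfl)
  have hx0 : x = 0 := hndi i x hxi (fun w hw => hle hxrest w hw)
  simp [hx0]
end

section
/- Suppose W = W₁ ⊕ ⋯ ⊕ W_k is a direct sum of pairwise B-orthogonal ρ-invariant subspaces such that B restricted to each Wᵢ is nondegenerate, Γ acts irreducibly on each Wᵢ, and the Wᵢ are pairwise non-isomorphic as representations of Γ. Let g ∈ GL(W) be a similitude of B with factor c ≠ 0 (i.e. B(gv, gw) = c·B(v,w) for all v,w) commuting with ρ(γ) for every γ ∈ Γ. Then each Wᵢ is g-invariant and the restriction of g to Wᵢ is multiplication by a scalar aᵢ ∈ ℂ× satisfying aᵢ² = c for every i; in particular a₁² = a₂² = ⋯ = a_k². -/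
/-- Let `W` be a finite-dimensional complex vector space, `B` a reflexive nondegenerate bilinear
form on `W`, and `ρ : Γ → GL(W)` acting by similitudes of `B`.  Suppose `W = W₁ ⊕ ⋯ ⊕ W_k` is a
direct sum of pairwise `B`-orthogonal `ρ`-invariant subspaces such that `B` restricted to each
`Wᵢ` is nondegenerate, `Γ` acts irreducibly on each `Wᵢ`, and the `Wᵢ` are pairwise
non-isomorphic as representations of `Γ`.  Let `g ∈ GL(W)` be a similitude of `B` with factor
`c ≠ 0` commuting with `ρ(γ)` for every `γ`.  Then each `Wᵢ` is `g`-invariant and `g` restricted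
to `Wᵢ` is multiplication by a scalar `aᵢ ∈ ℂˣ` with `aᵢ² = c`. -/
theorem centralizer_similitude_is_scalar_on_components
    {W : Type*} [AddCommGroup W] [Module ℂ W] [FiniteDimensional ℂ W]
    {Γ : Type*} [Group Γ]
    (B : LinearMap.BilinForm ℂ W)
    (hrefl : ∀ v w : W, B v w = 0 → B w v = 0)
    (hnd : ∀ v : W, (∀ w : W, B v w = 0) → v = 0)
    (ρ : Γ →* (W →ₗ[ℂ] W)ˣ)
    (c : Γ → ℂ) (hc : ∀ γ, c γ ≠ 0)
    (hsim : ∀ γ : Γ, ∀ v w : W,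
      B ((ρ γ : W →ₗ[ℂ] W) v) ((ρ γ : W →ₗ[ℂ] W) w) = c γ * B v w)
    (k : ℕ) (Wi : Fin k → Submodule ℂ W)
    (hinternal : DirectSum.IsInternal Wi)
    (horth : ∀ i j : Fin k, i ≠ j → ∀ v ∈ Wi i, ∀ w ∈ Wi j, B v w = 0)
    (hndi : ∀ i : Fin k, ∀ v ∈ Wi i, (∀ w ∈ Wi i, B v w = 0) → v = 0)
    (hinv : ∀ i : Fin k, ∀ γ : Γ, ∀ v ∈ Wi i, (ρ γ : W →ₗ[ℂ] W) v ∈ Wi i)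
    (hne : ∀ i : Fin k, Wi i ≠ ⊥)
    (hirr : ∀ i : Fin k, ∀ U : Submodule ℂ W, U ≤ Wi i →
      (∀ γ : Γ, ∀ u ∈ U, (ρ γ : W →ₗ[ℂ] W) u ∈ U) → U = ⊥ ∨ U = Wi i)
    (hnoniso : ∀ i j : Fin k, i ≠ j → ¬ ∃ T : W →ₗ[ℂ] W,
      (∀ x ∈ Wi i, T x ∈ Wi j) ∧
      (∀ γ : Γ, ∀ x ∈ Wi i, T ((ρ γ : W →ₗ[ℂ] W) x) = (ρ γ : W →ₗ[ℂ] W) (T x)) ∧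
      (∀ x ∈ Wi i, T x = 0 → x = 0) ∧
      (∀ y ∈ Wi j, ∃ x ∈ Wi i, T x = y))
    (g : (W →ₗ[ℂ] W)ˣ) (cg : ℂ) (hcg : cg ≠ 0)
    (hgsim : ∀ v w : W, B ((g : W →ₗ[ℂ] W) v) ((g : W →ₗ[ℂ] W) w) = cg * B v w)
    (hgcomm : ∀ γ : Γ,
      (g : W →ₗ[ℂ] W) ∘ₗ (ρ γ : W →ₗ[ℂ] W) = (ρ γ : W →ₗ[ℂ] W) ∘ₗ (g : W →ₗ[ℂ] W)) :
    ∀ i : Fin k, (∀ x ∈ Wi i, (g : W →ₗ[ℂ] W) x ∈ Wi i) ∧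
      ∃ a : ℂ, a ≠ 0 ∧ a ^ 2 = cg ∧ ∀ x ∈ Wi i, (g : W →ₗ[ℂ] W) x = a • x := by
  classical
  -- The linear equivalence given by the internal direct sum
  let e : (DirectSum (Fin k) (fun j => Wi j)) ≃ₗ[ℂ] W :=
    LinearEquiv.ofBijective (DirectSum.coeLinearMap Wi) hinternal
  -- projections onto the components
  let π : Fin k → (W →ₗ[ℂ] W) := fun j =>
    (Wi j).subtype ∘ₗ (DirectSum.component ℂ (Fin k) (fun j => Wi j) j) ∘ₗ e.symm.toLinearMap
  have hπ_app : ∀ (j : Fin k) (y : W), π j y = ((e.symm y) j : W) := by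
    intro j y
    show ((DirectSum.component ℂ (Fin k) (fun j => Wi j) j (e.symm y)) : W) = _
    rw [← DirectSum.apply_eq_component]
  have hπ_mem : ∀ j y, π j y ∈ Wi j := by
    intro j y
    rw [hπ_app]
    exact ((e.symm y) j).2
  have hπ_same : ∀ (j : Fin k), ∀ x ∈ Wi j, π j x = x := by
    intro j x hx
    rw [hπ_app]
    rw [hinternal.ofBijective_coeLinearMap_of_mem hx]
  have hπ_ne : ∀ (j l : Fin k), l ≠ j → ∀ x ∈ Wi l, π j x = 0 := by
    intro j l hlj x hx
    rw [hπ_app]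
    rw [hinternal.ofBijective_coeLinearMap_of_mem_ne hlj hx]
    rfl
  have hπ_sum : ∀ y : W, ∑ j, π j y = y := by
    intro y
    have h1 : ∑ j, DirectSum.coeLinearMap Wi
        (DirectSum.of (fun j => Wi j) j ((e.symm y) j)) = y := by
      rw [← map_sum, DirectSum.sum_univ_of]
      exact e.apply_symm_apply y
    conv_rhs => rw [← h1]
    refine Finset.sum_congr rfl (fun j _ => ?_)
    rw [hπ_app, DirectSum.coeLinearMap_of]
  -- projections commute with the action
  have hπρ : ∀ (γ : Γ) (j : Fin k) (y : W),
      π j ((ρ γ : W →ₗ[ℂ] W) y) = (ρ γ : W →ₗ[ℂ] W) (π j y) := by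
    intro γ j y
    have hterm : ∀ l : Fin k, π j ((ρ γ : W →ₗ[ℂ] W) (π l y)) =
        if l = j then (ρ γ : W →ₗ[ℂ] W) (π l y) else 0 := by
      intro l
      by_cases hlj : l = j
      · subst hlj
        rw [if_pos rfl]
        exact hπ_same l _ (hinv l γ _ (hπ_mem l y))
      · rw [if_neg hlj]
        exact hπ_ne j l hlj _ (hinv l γ _ (hπ_mem l y))
    calc π j ((ρ γ : W →ₗ[ℂ] W) y)
        = ∑ l, π j ((ρ γ : W →ₗ[ℂ] W) (π l y)) := by
          conv_lhs => rw [← hπ_sum y]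
          rw [map_sum, map_sum]
      _ = ∑ l, if l = j then (ρ γ : W →ₗ[ℂ] W) (π l y) else 0 :=
          Finset.sum_congr rfl (fun l _ => hterm l)
      _ = (ρ γ : W →ₗ[ℂ] W) (π j y) := by
          rw [Finset.sum_ite_eq' Finset.univ j]
          simp
  have hgρ : ∀ (γ : Γ) (y : W),
      (g : W →ₗ[ℂ] W) ((ρ γ : W →ₗ[ℂ] W) y) = (ρ γ : W →ₗ[ℂ] W) ((g : W →ₗ[ℂ] W) y) := by
    intro γ y
    have := congrArg (fun f : W →ₗ[ℂ] W => f y) (hgcomm γ)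
    simpa using this
  -- off-diagonal components of g vanish
  have hzero : ∀ i j : Fin k, i ≠ j → ∀ x ∈ Wi i, π j ((g : W →ₗ[ℂ] W) x) = 0 := by
    intro i j hij
    set T : W →ₗ[ℂ] W := π j ∘ₗ (g : W →ₗ[ℂ] W) with hT
    have hTapp : ∀ x, T x = π j ((g : W →ₗ[ℂ] W) x) := fun x => rfl
    have hTeq : ∀ (γ : Γ) (x : W), T ((ρ γ : W →ₗ[ℂ] W) x) = (ρ γ : W →ₗ[ℂ] W) (T x) := by
      intro γ x
      rw [hTapp, hTapp, hgρ, hπρ]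
    have hTmem : ∀ x, T x ∈ Wi j := fun x => hπ_mem j _
    set K : Submodule ℂ W := Wi i ⊓ LinearMap.ker T with hK
    set R : Submodule ℂ W := (Wi i).map T with hR
    have hKle : K ≤ Wi i := inf_le_left
    have hKinv : ∀ γ : Γ, ∀ u ∈ K, (ρ γ : W →ₗ[ℂ] W) u ∈ K := by
      intro γ u hu
      refine ⟨hinv i γ u hu.1, ?_⟩
      have h0 : T u = 0 := hu.2
      show T _ = 0
      rw [hTeq, h0, map_zero]
    have hRle : R ≤ Wi j := by
      rintro y ⟨x, _, rfl⟩
      exact hTmem x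
    have hRinv : ∀ γ : Γ, ∀ u ∈ R, (ρ γ : W →ₗ[ℂ] W) u ∈ R := by
      rintro γ u ⟨x, hx, rfl⟩
      exact ⟨(ρ γ : W →ₗ[ℂ] W) x, hinv i γ x hx, (hTeq γ x)⟩
    rcases hirr i K hKle hKinv with hK0 | hKfull
    · rcases hirr j R hRle hRinv with hR0 | hRfull
      · intro x hx
        have hxR : T x ∈ R := ⟨x, hx, rfl⟩
        rw [hR0] at hxR
        exact hxR
      · exfalso
        apply hnoniso i j hij
        refine ⟨T, fun x _ => hTmem x, fun γ x _ => hTeq γ x, ?_, ?_⟩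
        · intro x hx hx0
          have hxK : x ∈ K := ⟨hx, hx0⟩
          rw [hK0] at hxK
          exact hxK
        · intro y hy
          rw [← hRfull] at hy
          obtain ⟨x, hx, hxy⟩ := hy
          exact ⟨x, hx, hxy⟩
    · intro x hx
      have hxK : x ∈ K := hKfull ▸ hx
      exact hxK.2
  -- g preserves each component
  have hginv : ∀ i : Fin k, ∀ x ∈ Wi i, (g : W →ₗ[ℂ] W) x ∈ Wi i := by
    intro i x hx
    have hs : (g : W →ₗ[ℂ] W) x = ∑ j, π j ((g : W →ₗ[ℂ] W) x) := (hπ_sum _).symm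
    rw [hs, Finset.sum_eq_single i
      (fun j _ hj => hzero i j (fun h => hj h.symm) x hx)
      (fun h => absurd (Finset.mem_univ i) h)]
    exact hπ_mem i _
  intro i
  refine ⟨hginv i, ?_⟩
  -- Schur: g is scalar on Wi i
  have hnt : Nontrivial (Wi i) := Submodule.nontrivial_iff_ne_bot.mpr (hne i)
  let gi : (Wi i) →ₗ[ℂ] (Wi i) := (g : W →ₗ[ℂ] W).restrict (hginv i)
  obtain ⟨a, ha⟩ := Module.End.exists_eigenvalue gi
  obtain ⟨v, hv⟩ := ha.exists_hasEigenvector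
  have hva : (g : W →ₗ[ℂ] W) (v : W) = a • (v : W) := by
    have h1 := hv.apply_eq_smul
    have h2 := congrArg (Subtype.val) h1
    simpa [gi, LinearMap.restrict_apply] using h2
  set K : Submodule ℂ W :=
    Wi i ⊓ LinearMap.ker ((g : W →ₗ[ℂ] W) - a • (LinearMap.id : W →ₗ[ℂ] W)) with hK
  have hKmem : ∀ x : W, x ∈ K ↔ x ∈ Wi i ∧ (g : W →ₗ[ℂ] W) x = a • x := by
    intro x
    rw [hK, Submodule.mem_inf, LinearMap.mem_ker, LinearMap.sub_apply, LinearMap.smul_apply,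
      LinearMap.id_apply, sub_eq_zero]
  have hKne : K ≠ ⊥ := by
    rw [Submodule.ne_bot_iff]
    refine ⟨(v : W), (hKmem _).mpr ⟨v.2, hva⟩, fun h => hv.right (Subtype.ext h)⟩
  have hKinv : ∀ γ : Γ, ∀ u ∈ K, (ρ γ : W →ₗ[ℂ] W) u ∈ K := by
    intro γ u hu
    rw [hKmem] at hu ⊢
    exact ⟨hinv i γ u hu.1, by rw [hgρ, hu.2, map_smul]⟩
  have hKfull : K = Wi i := (hirr i K inf_le_left hKinv).resolve_left hKne
  have hscal : ∀ x ∈ Wi i, (g : W →ₗ[ℂ] W) x = a • x := by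
    intro x hx
    exact ((hKmem x).mp (hKfull ▸ hx)).2
  obtain ⟨v0, hv0mem, hv0ne⟩ := (Submodule.ne_bot_iff _).mp (hne i)
  have hane : a ≠ 0 := by
    intro h0
    apply hv0ne
    have h1 : (g : W →ₗ[ℂ] W) v0 = 0 := by rw [hscal v0 hv0mem, h0, zero_smul]
    calc v0 = ((g⁻¹ : (W →ₗ[ℂ] W)ˣ) : W →ₗ[ℂ] W) ((g : W →ₗ[ℂ] W) v0) := by
          rw [← LinearMap.comp_apply, ← Module.End.mul_eq_comp, ← Units.val_mul,
            inv_mul_cancel g, Units.val_one, Module.End.one_apply]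
      _ = 0 := by rw [h1, map_zero]
  have hBvw : ∃ w ∈ Wi i, B v0 w ≠ 0 := by
    by_contra hcon
    push_neg at hcon
    exact hv0ne (hndi i v0 hv0mem hcon)
  obtain ⟨w0, hw0mem, hBne⟩ := hBvw
  have hcalc : a ^ 2 * B v0 w0 = cg * B v0 w0 := by
    have h1 := hgsim v0 w0
    rw [hscal v0 hv0mem, hscal w0 hw0mem] at h1
    have h2 : B (a • v0) (a • w0) = a ^ 2 * B v0 w0 := by
      simp only [map_smul, LinearMap.smul_apply, smul_eq_mul]
      ring
    rw [h2] at h1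
    exact h1
  exact ⟨a, hane, mul_right_cancel₀ hBne hcalc, hscal⟩
end

section
/- Suppose W = W₁ ⊕ ⋯ ⊕ W_k is a direct sum of pairwise B-orthogonal ρ-invariant subspaces such that B restricted to each Wᵢ is nondegenerate, Γ acts irreducibly on each Wᵢ, and the Wᵢ are pairwise non-isomorphic as representations of Γ. Then any two similitudes g, h of B that commute with ρ(γ) for all γ ∈ Γ commute with each other, and every such similitude g with factor c satisfies g² = c·id_W; in particular the group of such similitudes is commutative and, modulo nonzero scalar multiples of the identity, every element has order dividing 2. -/
/-!
A map commuting with `Γ` sends the irreducible block `Wᵢ` to blocks isomorphic to it (Schur), so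
it preserves each `Wᵢ` and acts on it by a scalar `μᵢ`. Two such maps therefore commute, and if
`g` is a similitude with factor `c`, nondegeneracy of `B` on `Wᵢ` turns
`B (g v) (g w) = μᵢ² B v w = c B v w` into `μᵢ² = c`.
-/

namespace DirectSum.IsInternal

variable {R M ι : Type*} [Ring R] [AddCommGroup M] [Module R M] [DecidableEq ι]
  {A : ι → Submodule R M}

noncomputable def proj (h : IsInternal A) (j : ι) : Module.End R M :=
  (A j).subtype ∘ₗ component R ι (fun i => A i) j ∘ₗ
    (LinearEquiv.ofBijective (coeLinearMap A) h).symm.toLinearMap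

theorem proj_apply (h : IsInternal A) (j : ι) (x : M) :
    h.proj j x = ((LinearEquiv.ofBijective (coeLinearMap A) h).symm x j : M) := rfl

theorem proj_mem (h : IsInternal A) (j : ι) (x : M) : h.proj j x ∈ A j := SetLike.coe_mem _

theorem proj_of_mem (h : IsInternal A) {j : ι} {x : M} (hx : x ∈ A j) : h.proj j x = x := by
  rw [proj_apply, h.ofBijective_coeLinearMap_of_mem hx]

theorem proj_of_mem_ne (h : IsInternal A) {i j : ι} (hij : i ≠ j) {x : M} (hx : x ∈ A i) :
    h.proj j x = 0 := by
  rw [proj_apply, h.ofBijective_coeLinearMap_of_mem_ne hij hx, Submodule.coe_zero]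

theorem sum_proj (h : IsInternal A) [Fintype ι] (x : M) : ∑ j, h.proj j x = x := by
  set e := LinearEquiv.ofBijective (coeLinearMap A) h
  calc ∑ j, h.proj j x = coeLinearMap A (∑ j, of (fun i => A i) j (e.symm x j)) := by
        simp only [map_sum, coeLinearMap_of, proj_apply, e]
    _ = x := by rw [sum_univ_of]; exact e.apply_symm_apply x

theorem mem_of_proj_eq_zero (h : IsInternal A) [Fintype ι] {i : ι} {x : M}
    (hx : ∀ j ≠ i, h.proj j x = 0) : x ∈ A i := by
  rw [← h.sum_proj x, Finset.sum_eq_single i (fun j _ hj => hx j hj) (by simp)]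
  exact h.proj_mem i x

theorem proj_apply_comm (h : IsInternal A) [Fintype ι] {f : Module.End R M}
    (hf : ∀ i, ∀ x ∈ A i, f x ∈ A i) (j : ι) (x : M) : h.proj j (f x) = f (h.proj j x) := by
  conv_lhs => rw [← h.sum_proj x, map_sum, map_sum]
  refine (Finset.sum_eq_single j (fun i _ hij => ?_) (by simp)).trans ?_
  · exact h.proj_of_mem_ne hij (hf i _ (h.proj_mem i x))
  · exact h.proj_of_mem (hf j _ (h.proj_mem j x))

theorem linearMap_ext (h : IsInternal A) {N : Type*} [AddCommGroup N] [Module R N]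
    {f g : M →ₗ[R] N} (hfg : ∀ i, ∀ x ∈ A i, f x = g x) : f = g :=
  LinearMap.ext_on (s := ⋃ i, (A i : Set M))
    (by rw [← Submodule.iSup_eq_span, h.submodule_iSup_eq_top])
    (fun x hx => by
      obtain ⟨i, hi⟩ := Set.mem_iUnion.mp hx
      exact hfg i x hi)

end DirectSum.IsInternal

namespace Submodule

variable {K V Γ : Type*} [Field K] [AddCommGroup V] [Module K V] (ρ : Γ → Module.End K V)

def IsInvariantUnder (U : Submodule K V) : Prop :=
  ∀ γ, ∀ u ∈ U, ρ γ u ∈ U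

def IsIrreducibleUnder (U : Submodule K V) : Prop :=
  ∀ U' : Submodule K V, U' ≤ U → U'.IsInvariantUnder ρ → U' = ⊥ ∨ U' = U

def EquivariantlyIsomorphic (U U' : Submodule K V) : Prop :=
  ∃ T : Module.End K V, (∀ x ∈ U, T x ∈ U') ∧ (∀ γ, ∀ x ∈ U, T (ρ γ x) = ρ γ (T x)) ∧
    (∀ x ∈ U, T x = 0 → x = 0) ∧ (∀ y ∈ U', ∃ x ∈ U, T x = y)

variable {ρ} {U U' : Submodule K V} {T : Module.End K V}

theorem IsInvariantUnder.ker_inf (hU : U.IsInvariantUnder ρ)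
    (hT : ∀ γ, ∀ x ∈ U, T (ρ γ x) = ρ γ (T x)) : (LinearMap.ker T ⊓ U).IsInvariantUnder ρ := by
  rintro γ u ⟨hTu, hu⟩
  refine ⟨?_, hU γ u hu⟩
  rw [SetLike.mem_coe, LinearMap.mem_ker] at hTu ⊢
  rw [hT γ u hu, hTu, map_zero]

theorem IsInvariantUnder.map (hU : U.IsInvariantUnder ρ)
    (hT : ∀ γ, ∀ x ∈ U, T (ρ γ x) = ρ γ (T x)) : (U.map T).IsInvariantUnder ρ := by
  rintro γ _ ⟨x, hx, rfl⟩
  exact ⟨ρ γ x, hU γ x hx, hT γ x hx⟩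

theorem IsIrreducibleUnder.injOn_of_intertwines (hU : U.IsInvariantUnder ρ)
    (hUirr : U.IsIrreducibleUnder ρ) (hT : ∀ γ, ∀ x ∈ U, T (ρ γ x) = ρ γ (T x))
    {v : V} (hv : v ∈ U) (hTv : T v ≠ 0) : ∀ x ∈ U, T x = 0 → x = 0 := by
  intro x hx hTx
  rcases hUirr _ inf_le_right (hU.ker_inf hT) with hbot | htop
  · have hxE : x ∈ LinearMap.ker T ⊓ U := ⟨hTx, hx⟩
    rwa [hbot, mem_bot] at hxE
  · exact absurd (htop.ge hv).1 hTv

theorem IsIrreducibleUnder.surjOn_of_intertwines (hU : U.IsInvariantUnder ρ)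
    (hU'irr : U'.IsIrreducibleUnder ρ) (hTU : ∀ x ∈ U, T x ∈ U')
    (hT : ∀ γ, ∀ x ∈ U, T (ρ γ x) = ρ γ (T x))
    {v : V} (hv : v ∈ U) (hTv : T v ≠ 0) : ∀ y ∈ U', ∃ x ∈ U, T x = y := by
  intro y hy
  rcases hU'irr _ (map_le_iff_le_comap.mpr hTU) (hU.map hT) with hbot | htop
  · exact absurd (by simpa [hbot] using mem_map_of_mem (f := T) hv) hTv
  · exact htop.ge hy

theorem eq_zero_of_intertwines_of_not_equivariantlyIsomorphic (hU : U.IsInvariantUnder ρ)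
    (hUirr : U.IsIrreducibleUnder ρ) (hU'irr : U'.IsIrreducibleUnder ρ)
    (hUU' : ¬ EquivariantlyIsomorphic ρ U U') (hTU : ∀ x ∈ U, T x ∈ U')
    (hT : ∀ γ, ∀ x ∈ U, T (ρ γ x) = ρ γ (T x)) : ∀ x ∈ U, T x = 0 := by
  by_contra! ⟨v, hv, hTv⟩
  exact hUU' ⟨T, hTU, hT, hUirr.injOn_of_intertwines hU hT hv hTv,
    hU'irr.surjOn_of_intertwines hU hTU hT hv hTv⟩

theorem IsIrreducibleUnder.exists_smul_of_commute [IsAlgClosed K] [FiniteDimensional K V]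
    (hU : U.IsInvariantUnder ρ) (hUirr : U.IsIrreducibleUnder ρ) {g : Module.End K V}
    (hgU : ∀ x ∈ U, g x ∈ U) (hg : ∀ γ, Commute g (ρ γ)) :
    ∃ μ : K, ∀ v ∈ U, g v = μ • v := by
  rcases eq_or_ne U ⊥ with rfl | hU_ne
  · exact ⟨0, fun v hv => by simp [(mem_bot K).mp hv]⟩
  have : Nontrivial U := nontrivial_iff_ne_bot.mpr hU_ne
  obtain ⟨μ, hμ⟩ := Module.End.exists_eigenvalue (g.restrict hgU)
  obtain ⟨v, hv⟩ := hμ.exists_hasEigenvector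
  set E := LinearMap.ker (g - μ • 1) ⊓ U
  have hE : E.IsInvariantUnder ρ := hU.ker_inf fun γ x _ => by
    rw [← Module.End.mul_apply, ← Module.End.mul_apply,
      ((hg γ).sub_left ((Commute.one_left _).smul_left μ)).eq]
  have hvE : (v : V) ∈ E := by
    refine ⟨?_, v.2⟩
    simpa [sub_eq_zero, Subtype.ext_iff] using Module.End.mem_eigenspace_iff.mp hv.1
  rcases hUirr E inf_le_right hE with hbot | htop
  · exact absurd (by simpa [hbot] using hvE) (Subtype.coe_ne_coe.mpr hv.2)
  · refine ⟨μ, fun x hx => ?_⟩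
    simpa [sub_eq_zero] using (htop.ge hx).1

end Submodule

section Blocks

open DirectSum Submodule

variable {K V Γ ι : Type*} [Field K] [AddCommGroup V] [Module K V] [Fintype ι] [DecidableEq ι]
  {ρ : Γ → Module.End K V} {A : ι → Submodule K V}

theorem DirectSum.IsInternal.mapsTo_of_commute (hA : IsInternal A)
    (hinv : ∀ i, (A i).IsInvariantUnder ρ) (hirr : ∀ i, (A i).IsIrreducibleUnder ρ)
    (hnoniso : ∀ i j, i ≠ j → ¬ EquivariantlyIsomorphic ρ (A i) (A j))
    {g : Module.End K V} (hg : ∀ γ, Commute g (ρ γ)) (i : ι) : ∀ v ∈ A i, g v ∈ A i := by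
  intro v hv
  refine hA.mem_of_proj_eq_zero fun j hji => ?_
  have hprojρ (γ : Γ) (x : V) : hA.proj j (ρ γ x) = ρ γ (hA.proj j x) :=
    hA.proj_apply_comm (fun l => hinv l γ) j x
  refine eq_zero_of_intertwines_of_not_equivariantlyIsomorphic (T := hA.proj j * g) (hinv i)
    (hirr i) (hirr j) (hnoniso i j hji.symm) (fun x _ => hA.proj_mem j _) (fun γ x _ => ?_) v hv
  rw [Module.End.mul_apply, Module.End.mul_apply, ← Module.End.mul_apply g, (hg γ).eq,
    Module.End.mul_apply, hprojρ]

theorem DirectSum.IsInternal.exists_smul_of_commute [IsAlgClosed K] [FiniteDimensional K V]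
    (hA : IsInternal A) (hinv : ∀ i, (A i).IsInvariantUnder ρ)
    (hirr : ∀ i, (A i).IsIrreducibleUnder ρ)
    (hnoniso : ∀ i j, i ≠ j → ¬ EquivariantlyIsomorphic ρ (A i) (A j))
    {g : Module.End K V} (hg : ∀ γ, Commute g (ρ γ)) (i : ι) :
    ∃ μ : K, ∀ v ∈ A i, g v = μ • v :=
  (hirr i).exists_smul_of_commute (hinv i) (hA.mapsTo_of_commute hinv hirr hnoniso hg i) hg

end Blocks

theorem LinearMap.BilinForm.apply_apply_eq_smul_of_similitude {K V : Type*} [Field K]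
    [AddCommGroup V] [Module K V] (B : LinearMap.BilinForm K V) {U : Submodule K V}
    (hU : ∀ v ∈ U, (∀ w ∈ U, B v w = 0) → v = 0) {g : Module.End K V} {c μ : K}
    (hg : ∀ v w, B (g v) (g w) = c * B v w) (hμ : ∀ v ∈ U, g v = μ • v) :
    ∀ v ∈ U, g (g v) = c • v := by
  intro v hv
  rcases eq_or_ne v 0 with rfl | hv0
  · simp
  obtain ⟨w, hw, hBvw⟩ : ∃ w ∈ U, B v w ≠ 0 := by
    by_contra! hall
    exact hv0 (hU v hv hall)
  have hμc : μ * μ = c := by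
    refine mul_right_cancel₀ hBvw ?_
    calc μ * μ * B v w = B (g v) (g w) := by
          rw [hμ v hv, hμ w hw, map_smul, map_smul, LinearMap.smul_apply, smul_eq_mul,
            smul_eq_mul, mul_assoc]
      _ = c * B v w := hg v w
  rw [hμ v hv, map_smul, hμ v hv, smul_smul, hμc]

theorem centralizer_similitudes_commute_and_square_is_scalar_general
    {W : Type*} [AddCommGroup W] [Module ℂ W] [FiniteDimensional ℂ W]
    {Γ : Type*} [Group Γ]
    (B : LinearMap.BilinForm ℂ W)
    (ρ : Γ →* (W →ₗ[ℂ] W)ˣ)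
    (k : ℕ) (Wi : Fin k → Submodule ℂ W)
    (hinternal : DirectSum.IsInternal Wi)
    (hndi : ∀ i : Fin k, ∀ v ∈ Wi i, (∀ w ∈ Wi i, B v w = 0) → v = 0)
    (hinv : ∀ i : Fin k, ∀ γ : Γ, ∀ v ∈ Wi i, (ρ γ : W →ₗ[ℂ] W) v ∈ Wi i)
    (hirr : ∀ i : Fin k, ∀ U : Submodule ℂ W, U ≤ Wi i →
      (∀ γ : Γ, ∀ u ∈ U, (ρ γ : W →ₗ[ℂ] W) u ∈ U) → U = ⊥ ∨ U = Wi i)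
    (hnoniso : ∀ i j : Fin k, i ≠ j → ¬ ∃ T : W →ₗ[ℂ] W,
      (∀ x ∈ Wi i, T x ∈ Wi j) ∧
      (∀ γ : Γ, ∀ x ∈ Wi i, T ((ρ γ : W →ₗ[ℂ] W) x) = (ρ γ : W →ₗ[ℂ] W) (T x)) ∧
      (∀ x ∈ Wi i, T x = 0 → x = 0) ∧
      (∀ y ∈ Wi j, ∃ x ∈ Wi i, T x = y)) :
    ∀ (g h : (W →ₗ[ℂ] W)ˣ) (cg ch : ℂ), cg ≠ 0 → ch ≠ 0 →
      (∀ v w : W, B ((g : W →ₗ[ℂ] W) v) ((g : W →ₗ[ℂ] W) w) = cg * B v w) →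
      (∀ v w : W, B ((h : W →ₗ[ℂ] W) v) ((h : W →ₗ[ℂ] W) w) = ch * B v w) →
      (∀ γ : Γ,
        (g : W →ₗ[ℂ] W) ∘ₗ (ρ γ : W →ₗ[ℂ] W) = (ρ γ : W →ₗ[ℂ] W) ∘ₗ (g : W →ₗ[ℂ] W)) →
      (∀ γ : Γ,
        (h : W →ₗ[ℂ] W) ∘ₗ (ρ γ : W →ₗ[ℂ] W) = (ρ γ : W →ₗ[ℂ] W) ∘ₗ (h : W →ₗ[ℂ] W)) →
      ((g : W →ₗ[ℂ] W) ∘ₗ (h : W →ₗ[ℂ] W) = (h : W →ₗ[ℂ] W) ∘ₗ (g : W →ₗ[ℂ] W)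
        ∧ ∀ v : W, (g : W →ₗ[ℂ] W) ((g : W →ₗ[ℂ] W) v) = cg • v) := by
  intro g h cg _ _ _ hg _ hgρ hhρ
  have scalar_on_blocks (f : Module.End ℂ W) (hf : ∀ γ, Commute f (ρ γ)) (i : Fin k) :
      ∃ μ : ℂ, ∀ v ∈ Wi i, f v = μ • v :=
    hinternal.exists_smul_of_commute (ρ := fun γ => (ρ γ : Module.End ℂ W)) hinv hirr hnoniso hf i
  choose μg hμg using scalar_on_blocks g hgρ
  choose μh hμh using scalar_on_blocks h hhρ
  refine ⟨hinternal.linearMap_ext fun i v hv => ?_, fun v => ?_⟩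
  · simp only [LinearMap.comp_apply, hμg i v hv, hμh i v hv, map_smul, smul_smul, mul_comm]
  · have hsq : (g : Module.End ℂ W) * g = cg • 1 := hinternal.linearMap_ext fun i =>
      B.apply_apply_eq_smul_of_similitude (hndi i) hg (hμg i)
    exact LinearMap.congr_fun hsq v

/-- Let `W` be a finite-dimensional complex vector space, `B` a reflexive nondegenerate bilinear
form on `W`, and `ρ : Γ → GL(W)` acting by similitudes of `B`.  Suppose `W = W₁ ⊕ ⋯ ⊕ W_k` is a
direct sum of pairwise `B`-orthogonal `ρ`-invariant subspaces such that `B` restricted to each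
`Wᵢ` is nondegenerate, `Γ` acts irreducibly on each `Wᵢ`, and the `Wᵢ` are pairwise
non-isomorphic as representations of `Γ`.  Then any two similitudes of `B` commuting with all
`ρ(γ)` commute with each other, and every such similitude `g` with factor `c` satisfies
`g² = c·id_W`. -/
theorem centralizer_similitudes_commute_and_square_is_scalar
    {W : Type*} [AddCommGroup W] [Module ℂ W] [FiniteDimensional ℂ W]
    {Γ : Type*} [Group Γ]
    (B : LinearMap.BilinForm ℂ W)
    (hrefl : ∀ v w : W, B v w = 0 → B w v = 0)
    (hnd : ∀ v : W, (∀ w : W, B v w = 0) → v = 0)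
    (ρ : Γ →* (W →ₗ[ℂ] W)ˣ)
    (c : Γ → ℂ) (hc : ∀ γ, c γ ≠ 0)
    (hsim : ∀ γ : Γ, ∀ v w : W,
      B ((ρ γ : W →ₗ[ℂ] W) v) ((ρ γ : W →ₗ[ℂ] W) w) = c γ * B v w)
    (k : ℕ) (Wi : Fin k → Submodule ℂ W)
    (hinternal : DirectSum.IsInternal Wi)
    (horth : ∀ i j : Fin k, i ≠ j → ∀ v ∈ Wi i, ∀ w ∈ Wi j, B v w = 0)
    (hndi : ∀ i : Fin k, ∀ v ∈ Wi i, (∀ w ∈ Wi i, B v w = 0) → v = 0)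
    (hinv : ∀ i : Fin k, ∀ γ : Γ, ∀ v ∈ Wi i, (ρ γ : W →ₗ[ℂ] W) v ∈ Wi i)
    (hne : ∀ i : Fin k, Wi i ≠ ⊥)
    (hirr : ∀ i : Fin k, ∀ U : Submodule ℂ W, U ≤ Wi i →
      (∀ γ : Γ, ∀ u ∈ U, (ρ γ : W →ₗ[ℂ] W) u ∈ U) → U = ⊥ ∨ U = Wi i)
    (hnoniso : ∀ i j : Fin k, i ≠ j → ¬ ∃ T : W →ₗ[ℂ] W,
      (∀ x ∈ Wi i, T x ∈ Wi j) ∧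
      (∀ γ : Γ, ∀ x ∈ Wi i, T ((ρ γ : W →ₗ[ℂ] W) x) = (ρ γ : W →ₗ[ℂ] W) (T x)) ∧
      (∀ x ∈ Wi i, T x = 0 → x = 0) ∧
      (∀ y ∈ Wi j, ∃ x ∈ Wi i, T x = y)) :
    ∀ (g h : (W →ₗ[ℂ] W)ˣ) (cg ch : ℂ), cg ≠ 0 → ch ≠ 0 →
      (∀ v w : W, B ((g : W →ₗ[ℂ] W) v) ((g : W →ₗ[ℂ] W) w) = cg * B v w) →
      (∀ v w : W, B ((h : W →ₗ[ℂ] W) v) ((h : W →ₗ[ℂ] W) w) = ch * B v w) →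
      (∀ γ : Γ,
        (g : W →ₗ[ℂ] W) ∘ₗ (ρ γ : W →ₗ[ℂ] W) = (ρ γ : W →ₗ[ℂ] W) ∘ₗ (g : W →ₗ[ℂ] W)) →
      (∀ γ : Γ,
        (h : W →ₗ[ℂ] W) ∘ₗ (ρ γ : W →ₗ[ℂ] W) = (ρ γ : W →ₗ[ℂ] W) ∘ₗ (h : W →ₗ[ℂ] W)) →
      ((g : W →ₗ[ℂ] W) ∘ₗ (h : W →ₗ[ℂ] W) = (h : W →ₗ[ℂ] W) ∘ₗ (g : W →ₗ[ℂ] W)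
        ∧ ∀ v : W, (g : W →ₗ[ℂ] W) ((g : W →ₗ[ℂ] W) v) = cg • v) :=
  centralizer_similitudes_commute_and_square_is_scalar_general B ρ k Wi hinternal hndi hinv hirr
    hnoniso
end
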